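/- arXiv:2603.20303 — 2 statements merged into one kernel-verified Lean document; each statement's English description precedes it below -/
import Mathlib

section
/- Let n be a positive natural number, let p : ℝ × (Fin n → ℝ) → ℝ be twice continuously differentiable in x and once in t, with p(t,x) > 0 everywhere, let v : ℝ × (Fin n → ℝ) → (Fin n → ℝ) be continuously differentiable in x, and let σ : ℝ → ℝ. Suppose p satisfies the continuity equation ∂_t p(t,x) = −∑_i ∂_i ( p(t,x) · v_i(t,x) ) for all (t,x). Define the drift f(t,x) := v(t,x) + (σ(t)²/2) · ∇_x (log p(t,·))(x). Then p satisfies the Fokker–Planck equation with this drift and diffusion coefficient σ: ∂_t p(t,x) = −∑_i ∂_i ( p(t,x) · f_i(t,x) ) + (σ(t)²/2) · ∑_i ∂_i ∂_i p(t,x) for all (t,x). -/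
/-- Marginal-preserving SDE drift: if the density `p` satisfies the continuity equation
with velocity `v`, then with the drift `f = v + (σ²/2) ∇ₓ log p` it satisfies the
Fokker–Planck equation with diffusion coefficient `σ`. -/
theorem fokker_planck_of_continuity (n : ℕ) (hn : 0 < n)
    (p : ℝ × (Fin n → ℝ) → ℝ)
    (hpx : ∀ t, ContDiff ℝ 2 (fun x => p (t, x)))
    (hpt : ∀ x, ContDiff ℝ 1 (fun t => p (t, x)))
    (hpos : ∀ t x, 0 < p (t, x))
    (v : ℝ × (Fin n → ℝ) → Fin n → ℝ)
    (hv : ∀ t, ContDiff ℝ 1 (fun x => v (t, x)))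
    (σ : ℝ → ℝ)
    (hcont : ∀ t x, deriv (fun s => p (s, x)) t
      = -∑ i, fderiv ℝ (fun y => p (t, y) * v (t, y) i) x (Pi.single i 1))
    (f : ℝ × (Fin n → ℝ) → Fin n → ℝ)
    (hf : ∀ t x i, f (t, x) i = v (t, x) i
      + σ t ^ 2 / 2 * fderiv ℝ (fun y => Real.log (p (t, y))) x (Pi.single i 1)) :
    ∀ t x, deriv (fun s => p (s, x)) t
      = -∑ i, fderiv ℝ (fun y => p (t, y) * f (t, y) i) x (Pi.single i 1)
        + σ t ^ 2 / 2 *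
          ∑ i, fderiv ℝ (fun y => fderiv ℝ (fun z => p (t, z)) y (Pi.single i 1)) x
            (Pi.single i 1) := by
  intro t x
  set c := σ t ^ 2 / 2 with hc'
  have hP : ContDiff ℝ 2 (fun y => p (t, y)) := hpx t
  have hPd : Differentiable ℝ (fun y => p (t, y)) := hP.differentiable (by norm_num)
  have hfd : ContDiff ℝ 1 (fderiv ℝ (fun y => p (t, y))) :=
    hP.fderiv_right (by norm_num)
  have hg : ∀ i : Fin n, DifferentiableAt ℝ
      (fun y => fderiv ℝ (fun z => p (t, z)) y (Pi.single i 1)) x := by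
    intro i
    exact ((hfd.differentiable one_ne_zero).clm_apply (differentiable_const _)) x
  have hvd : ∀ i : Fin n, DifferentiableAt ℝ (fun y => v (t, y) i) x := by
    intro i
    exact (differentiable_pi.mp ((hv t).differentiable one_ne_zero) i) x
  have key : ∀ i : Fin n, (fun y => p (t, y) * f (t, y) i)
      = fun y => p (t, y) * v (t, y) i + c * fderiv ℝ (fun z => p (t, z)) y (Pi.single i 1) := by
    intro i; funext y
    have hlog : fderiv ℝ (fun z => Real.log (p (t, z))) y
        = (p (t, y))⁻¹ • fderiv ℝ (fun z => p (t, z)) y :=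
      (((hPd y).hasFDerivAt).log (ne_of_gt (hpos t y))).fderiv
    rw [hf, hlog]
    have hpne : p (t, y) ≠ 0 := ne_of_gt (hpos t y)
    simp only [ContinuousLinearMap.smul_apply, smul_eq_mul]
    field_simp
    ring
  have hterm : ∀ i : Fin n,
      fderiv ℝ (fun y => p (t, y) * f (t, y) i) x (Pi.single i 1)
      = fderiv ℝ (fun y => p (t, y) * v (t, y) i) x (Pi.single i 1)
        + c * fderiv ℝ (fun y => fderiv ℝ (fun z => p (t, z)) y (Pi.single i 1)) x
            (Pi.single i 1) := by
    intro i
    rw [key i]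
    have h1 : DifferentiableAt ℝ (fun y => p (t, y) * v (t, y) i) x :=
      (hPd x).mul (hvd i)
    have h2 : DifferentiableAt ℝ
        (fun y => c * fderiv ℝ (fun z => p (t, z)) y (Pi.single i 1)) x :=
      (hg i).const_mul c
    rw [fderiv_fun_add h1 h2, fderiv_const_mul (hg i) c]
    simp
  rw [hcont t x]
  rw [Finset.sum_congr rfl (fun i _ => hterm i)]
  rw [Finset.sum_add_distrib, ← Finset.mul_sum]
  ring
end

section
/- Let n be a positive natural number and let d ∈ Fin n → ℝ. For t ∈ (0,1), define the Gaussian path density p(t,x) := (2π t²)^(−n/2) · exp(−‖x − (1−t)·d‖² / (2t²)) on ℝⁿ, and the velocity field u(t,x) := t⁻¹ • (x − d). Then p satisfies the continuity equation: for all t ∈ (0,1) and all x, ∂_t p(t,x) + ∑_i ∂_i ( p(t,x) · u_i(t,x) ) = 0. -/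
lemma gauss_rpow_aux (n : ℕ) (s : ℝ) (hs : 0 < s) :
    (2 * Real.pi * s ^ 2) ^ (-(n : ℝ) / 2)
      = (2 * Real.pi) ^ (-(n : ℝ) / 2) * (s ^ n)⁻¹ := by
  rw [Real.mul_rpow (by positivity) (by positivity)]
  congr 1
  rw [← Real.rpow_natCast s 2, ← Real.rpow_mul hs.le]
  have h : ((2 : ℕ) : ℝ) * (-(n : ℝ) / 2) = -(n : ℝ) := by push_cast; ring
  rw [h, Real.rpow_neg hs.le, Real.rpow_natCast]

/-- The Gaussian path density `p_t(x) = N(x; (1−t)d, t² I)` satisfies the continuity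
equation with the straight-line velocity field `u(t,x) = (x − d)/t` on `t ∈ (0,1)`. -/
theorem gaussian_path_continuity_equation (n : ℕ) (hn : 0 < n) (d : Fin n → ℝ)
    (p : ℝ → (Fin n → ℝ) → ℝ)
    (hp : ∀ t x, p t x = (2 * Real.pi * t ^ 2) ^ (-(n : ℝ) / 2)
      * Real.exp (-(∑ i, (x i - (1 - t) * d i) ^ 2) / (2 * t ^ 2)))
    (u : ℝ → (Fin n → ℝ) → Fin n → ℝ)
    (hu : ∀ t x, u t x = t⁻¹ • (x - d)) :
    ∀ t ∈ Set.Ioo (0 : ℝ) 1, ∀ x : Fin n → ℝ,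
      deriv (fun s => p s x) t
        + ∑ i, fderiv ℝ (fun y => p t y * u t y i) x (Pi.single i 1) = 0 := by
  rintro t ⟨ht0, ht1⟩ x
  have htne : t ≠ 0 := ht0.ne'
  set C : ℝ := (2 * Real.pi) ^ (-(n : ℝ) / 2) with hCdef
  set K : ℝ := (2 * Real.pi * t ^ 2) ^ (-(n : ℝ) / 2) with hKdef
  have hKC : K = C * (t ^ n)⁻¹ := gauss_rpow_aux n t ht0
  set B : ℝ := ∑ i, (x i - (1 - t) * d i) ^ 2 with hBdef
  set A : ℝ := ∑ i, (x i - (1 - t) * d i) * d i with hAdef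
  set W : ℝ := ∑ i, (x i - (1 - t) * d i) * (x i - d i) with hWdef
  have hW : W = B - t * A := by
    rw [hWdef, hBdef, hAdef, Finset.mul_sum, ← Finset.sum_sub_distrib]
    exact Finset.sum_congr rfl fun i _ => by ring
  set E : ℝ := Real.exp (-B / (2 * t ^ 2)) with hEdef
  -- time derivative
  have hinv : HasDerivAt (fun s : ℝ => (s ^ n)⁻¹) (-(↑n * t ^ (n - 1)) / (t ^ n) ^ 2) t :=
    (hasDerivAt_pow n t).inv (pow_ne_zero n htne)
  have hNi : ∀ i : Fin n, HasDerivAt (fun s : ℝ => (x i - (1 - s) * d i) ^ 2)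
      (2 * (x i - (1 - t) * d i) ^ (2 - 1) * d i) t := by
    intro i
    have h1 : HasDerivAt (fun s : ℝ => x i - (1 - s) * d i) (d i) t := by
      have h2 : HasDerivAt (fun s : ℝ => (1 - s) * d i) (-(d i)) t := by
        simpa using ((hasDerivAt_id t).const_sub (1 : ℝ)).mul_const (d i)
      simpa using h2.const_sub (x i)
    simpa using h1.fun_pow 2
  have hS : HasDerivAt (fun s : ℝ => ∑ i, (x i - (1 - s) * d i) ^ 2)
      (∑ i, 2 * (x i - (1 - t) * d i) ^ (2 - 1) * d i) t :=
    HasDerivAt.fun_sum (fun i _ => hNi i)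
  have hDen : HasDerivAt (fun s : ℝ => 2 * s ^ 2) (2 * (2 * t ^ (2 - 1))) t := by
    simpa using (hasDerivAt_pow 2 t).const_mul (2 : ℝ)
  have hQ := (hS.neg.div hDen (by positivity)).exp
  have hG := (hinv.mul hQ).const_mul C
  have hev : (fun s => p s x) =ᶠ[nhds t] (fun s : ℝ => C *
      ((s ^ n)⁻¹ * Real.exp (-(∑ i, (x i - (1 - s) * d i) ^ 2) / (2 * s ^ 2)))) := by
    filter_upwards [eventually_gt_nhds ht0] with s hs
    rw [hp, gauss_rpow_aux n s hs, hCdef]; ring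
  have hderiv : deriv (fun s => p s x) t
      = C * ((-(↑n * t ^ (n - 1)) / (t ^ n) ^ 2) * E
        + (t ^ n)⁻¹ * (E * ((-(∑ i, 2 * (x i - (1 - t) * d i) ^ (2 - 1) * d i) * (2 * t ^ 2)
            - -B * (2 * (2 * t ^ (2 - 1)))) / (2 * t ^ 2) ^ 2))) := by
    rw [hev.deriv_eq]; exact hG.deriv
  have hsum2A : ∑ i, 2 * (x i - (1 - t) * d i) ^ (2 - 1) * d i = 2 * A := by
    rw [hAdef, Finset.mul_sum]
    exact Finset.sum_congr rfl fun i _ => by ring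
  -- spatial derivatives
  have hDsp : ∀ i : Fin n, fderiv ℝ (fun y => p t y * u t y i) x (Pi.single i 1)
      = (K * E) * ((2 * t ^ 2)⁻¹ * -(2 * (x i - (1 - t) * d i)) * (t⁻¹ * (x i - d i)) + t⁻¹) := by
    intro i
    have hfun : (fun y => p t y * u t y i) = (fun y : Fin n → ℝ =>
        (K * Real.exp ((2 * t ^ 2)⁻¹ * -(∑ j, (y j - (1 - t) * d j) ^ 2)))
          * (t⁻¹ * (y i - d i))) := by
      funext y
      rw [hp, hu, hKdef]
      simp only [Pi.smul_apply, Pi.sub_apply, smul_eq_mul, div_eq_inv_mul]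
    rw [hfun]
    have hproj : ∀ j : Fin n, HasFDerivAt (fun y : Fin n → ℝ => y j)
        (ContinuousLinearMap.proj j : (Fin n → ℝ) →L[ℝ] ℝ) x := fun j => hasFDerivAt_apply j x
    have hsq : ∀ j : Fin n, HasFDerivAt (fun y : Fin n → ℝ => (y j - (1 - t) * d j) ^ 2)
        ((2 * (x j - (1 - t) * d j)) • (ContinuousLinearMap.proj j : (Fin n → ℝ) →L[ℝ] ℝ)) x := by
      intro j
      have h1 := (hproj j).sub_const ((1 - t) * d j)
      have e : (2 * (x j - (1 - t) * d j)) • (ContinuousLinearMap.proj j : (Fin n → ℝ) →L[ℝ] ℝ)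
          = (x j - (1 - t) * d j) • ContinuousLinearMap.proj j
            + (x j - (1 - t) * d j) • ContinuousLinearMap.proj j := by
        rw [two_mul, add_smul]
      rw [e]
      simpa [pow_two] using h1.fun_mul h1
    have hsum : HasFDerivAt (fun y : Fin n → ℝ => ∑ j, (y j - (1 - t) * d j) ^ 2)
        (∑ j, (2 * (x j - (1 - t) * d j))
          • (ContinuousLinearMap.proj j : (Fin n → ℝ) →L[ℝ] ℝ)) x :=
      HasFDerivAt.fun_sum (fun j _ => hsq j)
    have hquot := hsum.fun_neg.const_mul (2 * t ^ 2)⁻¹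
    have hf := hquot.exp.const_mul K
    have hg := ((hproj i).sub_const (d i)).const_mul t⁻¹
    have hfull := hf.fun_mul hg
    rw [hfull.fderiv]
    have hEE : Real.exp ((2 * t ^ 2)⁻¹ * -(∑ j, (x j - (1 - t) * d j) ^ 2)) = E := by
      rw [hEdef, hBdef]; congr 1; ring
    simp only [ContinuousLinearMap.add_apply, ContinuousLinearMap.smul_apply,
      ContinuousLinearMap.neg_apply, ContinuousLinearMap.sum_apply,
      ContinuousLinearMap.proj_apply, Pi.single_apply, smul_eq_mul,
      mul_ite, mul_one, mul_zero, Finset.sum_ite_eq', Finset.mem_univ, if_true, hEE]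
    ring
  rw [hderiv, Finset.sum_congr rfl (fun i _ => hDsp i), ← Finset.mul_sum, hsum2A,
    Finset.sum_add_distrib, Finset.sum_const, Finset.card_univ, Fintype.card_fin,
    nsmul_eq_mul, hKC]
  have hsumW : ∑ i, (2 * t ^ 2)⁻¹ * -(2 * (x i - (1 - t) * d i)) * (t⁻¹ * (x i - d i))
      = -(t ^ 3)⁻¹ * W := by
    rw [hWdef, Finset.mul_sum]
    exact Finset.sum_congr rfl fun i _ => by field_simp
  rw [hsumW, hW]
  have hpow : t ^ n = t ^ (n - 1) * t := by
    rw [← pow_succ, Nat.sub_add_cancel hn]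
  rw [hpow]
  field_simp
  ring
end
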